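/- arXiv:1603.04556 — 6 statements merged into one kernel-verified Lean document; each statement's English description precedes it below -/
import Mathlib

section
/- Let f : ℝ≥0 → ℝ be defined by f(t) = sup over θ in C with ‖θ - θ*‖ ≤ t of ⟨v - θ*, θ - θ*⟩, where C ⊆ ℝ^d is a closed convex set, θ* ∈ C and v ∈ ℝ^d. Then the map t ↦ f(t) - t²/2 has a unique maximizer t*, and ‖Proj_C(v) - θ*‖ = t*, where Proj_C(v) is the Euclidean projection of v onto C. -/
open Real Set

/-- The supremum functional `f(t) = sup_{θ ∈ C, ‖θ-θ*‖ ≤ t} ⟨v - θ*, θ - θ*⟩`. -/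
noncomputable def fsup {d : ℕ} (C : Set (EuclideanSpace ℝ (Fin d)))
    (θs v : EuclideanSpace ℝ (Fin d)) (t : ℝ) : ℝ :=
  sSup {x : ℝ | ∃ θ ∈ C, ‖θ - θs‖ ≤ t ∧ x = (inner ℝ (v - θs) (θ - θs) : ℝ)}

/-!
Write `p = Proj_C v` and `T = ‖p - θ*‖`. Splitting `v - θ* = (v - p) + (p - θ*)` and using the
variational inequality `⟪v - p, θ - p⟫ ≤ 0` together with Cauchy–Schwarz gives
`f(t) ≤ ⟪v - θ*, p - θ*⟫ + t T - T² ≤ f(T) + t T - T²`, i.e.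
`f(t) - t²/2 ≤ f(T) - T²/2 - (t - T)²/2`. So `T` is a maximizer, and a strict one.
-/

section InnerProduct

variable {E : Type*} [NormedAddCommGroup E] [InnerProductSpace ℝ E]

theorem real_inner_sub_le_of_real_inner_le_zero {v p θs θ : E}
    (hvar : inner ℝ (v - p) (θ - p) ≤ 0) :
    inner ℝ (v - θs) (θ - θs) ≤
      inner ℝ (v - θs) (p - θs) + ‖θ - θs‖ * ‖p - θs‖ - ‖p - θs‖ ^ 2 := by
  have hshift : inner ℝ (v - θs) (θ - θs) - inner ℝ (v - θs) (p - θs) =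
      inner ℝ (v - θs) (θ - p) := by
    rw [← inner_sub_right, sub_sub_sub_cancel_right]
  have hsplit :
      inner ℝ (v - θs) (θ - p) = inner ℝ (v - p) (θ - p) + inner ℝ (p - θs) (θ - p) := by
    rw [← inner_add_left, sub_add_sub_cancel]
  have hpyth : inner ℝ (p - θs) (θ - p) = inner ℝ (p - θs) (θ - θs) - ‖p - θs‖ ^ 2 := by
    rw [← real_inner_self_eq_norm_sq, ← inner_sub_right, sub_sub_sub_cancel_right]
  have hcs : inner ℝ (p - θs) (θ - θs) ≤ ‖θ - θs‖ * ‖p - θs‖ :=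
    (real_inner_le_norm _ _).trans_eq (mul_comm _ _)
  linarith

theorem real_inner_le_zero_of_forall_dist_le {C : Set E} (hconv : Convex ℝ C) {v p : E}
    (hpC : p ∈ C) (hp : ∀ w ∈ C, dist v p ≤ dist v w) :
    ∀ θ ∈ C, inner ℝ (v - p) (θ - p) ≤ 0 := by
  have : Nonempty C := ⟨⟨p, hpC⟩⟩
  refine (norm_eq_iInf_iff_real_inner_le_zero hconv hpC).1 (le_antisymm ?_ ?_)
  · exact le_ciInf fun w => by simpa only [dist_eq_norm] using hp w w.2
  · exact ciInf_le ⟨0, by rintro _ ⟨w, rfl⟩; positivity⟩ (⟨p, hpC⟩ : C)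

end InnerProduct

section Fsup

variable {d : ℕ} {C : Set (EuclideanSpace ℝ (Fin d))} {θs v : EuclideanSpace ℝ (Fin d)}

theorem le_fsup {θ : EuclideanSpace ℝ (Fin d)} {t : ℝ} (hθ : θ ∈ C) (ht : ‖θ - θs‖ ≤ t) :
    inner ℝ (v - θs) (θ - θs) ≤ fsup C θs v t := by
  refine le_csSup ⟨‖v - θs‖ * t, ?_⟩ ⟨θ, hθ, ht, rfl⟩
  rintro _ ⟨θ', -, ht', rfl⟩
  exact (real_inner_le_norm _ _).trans (mul_le_mul_of_nonneg_left ht' (norm_nonneg _))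

theorem fsup_le {t b : ℝ} (hθs : θs ∈ C) (ht : 0 ≤ t)
    (hb : ∀ θ ∈ C, ‖θ - θs‖ ≤ t → inner ℝ (v - θs) (θ - θs) ≤ b) :
    fsup C θs v t ≤ b := by
  refine csSup_le ⟨_, θs, hθs, by simpa using ht, rfl⟩ ?_
  rintro _ ⟨θ, hθ, hθt, rfl⟩
  exact hb θ hθ hθt

theorem fsup_sub_sq_le_of_forall_dist_le (hconv : Convex ℝ C) (hθs : θs ∈ C)
    {p : EuclideanSpace ℝ (Fin d)} (hpC : p ∈ C) (hp : ∀ w ∈ C, dist v p ≤ dist v w)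
    {t : ℝ} (ht : 0 ≤ t) :
    fsup C θs v t - t ^ 2 / 2 ≤
      fsup C θs v ‖p - θs‖ - ‖p - θs‖ ^ 2 / 2 - (t - ‖p - θs‖) ^ 2 / 2 := by
  have hvar := real_inner_le_zero_of_forall_dist_le hconv hpC hp
  have hT : inner ℝ (v - θs) (p - θs) ≤ fsup C θs v ‖p - θs‖ := le_fsup hpC le_rfl
  have hft : fsup C θs v t ≤ inner ℝ (v - θs) (p - θs) + t * ‖p - θs‖ - ‖p - θs‖ ^ 2 :=
    fsup_le hθs ht fun θ hθ hθt =>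
      (real_inner_sub_le_of_real_inner_le_zero (hvar θ hθ)).trans <| by
        gcongr
  linarith

end Fsup

theorem stmt_0_general {d : ℕ} (C : Set (EuclideanSpace ℝ (Fin d)))
    (hconv : Convex ℝ C)
    (θs : EuclideanSpace ℝ (Fin d)) (hθs : θs ∈ C)
    (v proj : EuclideanSpace ℝ (Fin d))
    (hprojC : proj ∈ C) (hproj : ∀ w ∈ C, dist v proj ≤ dist v w) :
    (∃! tstar : ℝ, 0 ≤ tstar ∧
      ∀ t : ℝ, 0 ≤ t →
        fsup C θs v t - t ^ 2 / 2 ≤ fsup C θs v tstar - tstar ^ 2 / 2) ∧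
    (∀ t : ℝ, 0 ≤ t →
      fsup C θs v t - t ^ 2 / 2
        ≤ fsup C θs v ‖proj - θs‖ - ‖proj - θs‖ ^ 2 / 2) := by
  have key := fun (t : ℝ) (ht : 0 ≤ t) =>
    fsup_sub_sq_le_of_forall_dist_le hconv hθs hprojC hproj ht
  have hmax : ∀ t : ℝ, 0 ≤ t →
      fsup C θs v t - t ^ 2 / 2 ≤ fsup C θs v ‖proj - θs‖ - ‖proj - θs‖ ^ 2 / 2 :=
    fun t ht => (key t ht).trans (sub_le_self _ (by positivity))
  refine ⟨⟨‖proj - θs‖, ⟨norm_nonneg _, hmax⟩, ?_⟩, hmax⟩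
  rintro t ⟨ht, htmax⟩
  have hsq : (t - ‖proj - θs‖) ^ 2 ≤ 0 := by
    linarith [htmax ‖proj - θs‖ (norm_nonneg _), key t ht]
  exact sub_eq_zero.1 (pow_eq_zero_iff two_ne_zero |>.1 (le_antisymm hsq (sq_nonneg _)))

theorem stmt_0 {d : ℕ} (C : Set (EuclideanSpace ℝ (Fin d)))
    (hconv : Convex ℝ C) (hclosed : IsClosed C) (hne : C.Nonempty)
    (θs : EuclideanSpace ℝ (Fin d)) (hθs : θs ∈ C)
    (v proj : EuclideanSpace ℝ (Fin d))
    (hprojC : proj ∈ C) (hproj : ∀ w ∈ C, dist v proj ≤ dist v w) :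
    (∃! tstar : ℝ, 0 ≤ tstar ∧
      ∀ t : ℝ, 0 ≤ t →
        fsup C θs v t - t ^ 2 / 2 ≤ fsup C θs v tstar - tstar ^ 2 / 2) ∧
    (∀ t : ℝ, 0 ≤ t →
      fsup C θs v t - t ^ 2 / 2
        ≤ fsup C θs v ‖proj - θs‖ - ‖proj - θs‖ ^ 2 / 2) :=
  stmt_0_general C hconv θs hθs v proj hprojC hproj
end

section
/- The function t ↦ sup over θ ∈ C with ‖θ - θ*‖ ≤ t of ⟨v - θ*, θ - θ*⟩ is concave on [0,∞), satisfies f(0) = 0, and f(t) ≤ t·‖v - θ*‖ for all t ≥ 0. -/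
/-!
`fsup` is the value function `t ↦ sup {g x | x ∈ C, h x ≤ t}` of a linear objective `g` under a
convex constraint `h = ‖· - θ*‖`. Convex combinations of points feasible at radii `s` and `t` are
feasible at the combined radius, which makes any such value function of a concave objective
concave. Cauchy–Schwarz bounds the objective by `t ‖v - θ*‖`, and at `t = 0` the only feasible
point is `θ*`.
-/

open Real Set

section SublevelSup

open scoped Pointwise

variable {E : Type*} [AddCommGroup E] [Module ℝ E]

noncomputable def sublevelSup (C : Set E) (g h : E → ℝ) (t : ℝ) : ℝ :=
  sSup (g '' {x ∈ C | h x ≤ t})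

variable {C : Set E} {g h : E → ℝ} {I : Set ℝ}

theorem concaveOn_sublevelSup (hg : ConcaveOn ℝ C g) (hh : ConvexOn ℝ C h) (hI : Convex ℝ I)
    (hne : ∀ t ∈ I, {x ∈ C | h x ≤ t}.Nonempty)
    (hbdd : ∀ t ∈ I, BddAbove (g '' {x ∈ C | h x ≤ t})) :
    ConcaveOn ℝ I (sublevelSup C g h) := by
  refine ⟨hI, fun s hs t ht a b ha hb hab => ?_⟩
  have hst : a • s + b • t ∈ I := hI hs ht ha hb hab
  calc a • sublevelSup C g h s + b • sublevelSup C g h t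
      = sSup (a • g '' {x ∈ C | h x ≤ s} + b • g '' {x ∈ C | h x ≤ t}) := by
        rw [csSup_add ((hne s hs).image g).smul_set ((hbdd s hs).smul_of_nonneg ha)
          ((hne t ht).image g).smul_set ((hbdd t ht).smul_of_nonneg hb),
          Real.sSup_smul_of_nonneg ha, Real.sSup_smul_of_nonneg hb]
        rfl
    _ ≤ sublevelSup C g h (a • s + b • t) := by
        refine csSup_le (((hne s hs).image g).smul_set.add ((hne t ht).image g).smul_set) ?_
        rintro _ ⟨_, ⟨_, ⟨x, ⟨hxC, hxs⟩, rfl⟩, rfl⟩, _, ⟨_, ⟨y, ⟨hyC, hyt⟩, rfl⟩, rfl⟩, rfl⟩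
        have hmem : a • x + b • y ∈ {x ∈ C | h x ≤ a • s + b • t} :=
          ⟨hg.1 hxC hyC ha hb hab, (hh.2 hxC hyC ha hb hab).trans (by gcongr)⟩
        exact (hg.2 hxC hyC ha hb hab).trans (le_csSup (hbdd _ hst) (mem_image_of_mem g hmem))

end SublevelSup

section NormedSublevel

variable {E : Type*} [NormedAddCommGroup E] {C : Set E} {c : E}

theorem sublevelSup_norm_sub_zero (g : E → ℝ) (hc : c ∈ C) :
    sublevelSup C g (fun x => ‖x - c‖) 0 = g c := by
  have hsingleton : {x ∈ C | ‖x - c‖ ≤ 0} = {c} := by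
    ext x
    simp only [mem_ofPred_eq, mem_singleton_iff, norm_le_zero_iff, sub_eq_zero]
    exact ⟨And.right, fun hx => ⟨hx ▸ hc, hx⟩⟩
  rw [sublevelSup, hsingleton, image_singleton, csSup_singleton]

end NormedSublevel

section InnerProduct

variable {F : Type*} [NormedAddCommGroup F] [InnerProductSpace ℝ F] {C : Set F} {c w : F}

theorem concaveOn_inner_sub (hC : Convex ℝ C) :
    ConcaveOn ℝ C (fun x => inner ℝ w (x - c)) := by
  refine ⟨hC, fun x _ y _ a b _ _ hab => le_of_eq ?_⟩
  have hcombo : a • x + b • y - c = a • (x - c) + b • (y - c) := by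
    linear_combination (norm := module) hab • c
  dsimp only
  rw [hcombo, inner_add_right, real_inner_smul_right, real_inner_smul_right, smul_eq_mul,
    smul_eq_mul]

theorem mul_norm_mem_upperBounds_image_inner_sub (t : ℝ) :
    t * ‖w‖ ∈ upperBounds ((fun x => inner ℝ w (x - c)) '' {x ∈ C | ‖x - c‖ ≤ t}) := by
  rintro _ ⟨x, ⟨-, hx⟩, rfl⟩
  calc inner ℝ w (x - c) ≤ ‖w‖ * ‖x - c‖ := real_inner_le_norm w (x - c)
    _ ≤ t * ‖w‖ := by rw [mul_comm]; gcongr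

end InnerProduct

theorem fsup_eq_sublevelSup {d : ℕ} (C : Set (EuclideanSpace ℝ (Fin d)))
    (θs v : EuclideanSpace ℝ (Fin d)) :
    fsup C θs v = sublevelSup C (fun θ => inner ℝ (v - θs) (θ - θs)) (fun θ => ‖θ - θs‖) := by
  ext t
  simp only [fsup, sublevelSup, image, mem_ofPred_eq, and_assoc, eq_comm]

theorem stmt_2_general {d : ℕ} (C : Set (EuclideanSpace ℝ (Fin d)))
    (hconv : Convex ℝ C)
    (θs : EuclideanSpace ℝ (Fin d)) (hθs : θs ∈ C)
    (v : EuclideanSpace ℝ (Fin d)) :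
    ConcaveOn ℝ (Set.Ici (0 : ℝ)) (fsup C θs v) ∧
    fsup C θs v 0 = 0 ∧
    ∀ t : ℝ, 0 ≤ t → fsup C θs v t ≤ t * ‖v - θs‖ := by
  rw [fsup_eq_sublevelSup]
  have hne : ∀ t ∈ Ici (0 : ℝ), {θ ∈ C | ‖θ - θs‖ ≤ t}.Nonempty :=
    fun t ht => ⟨θs, hθs, by simpa using ht⟩
  refine ⟨?_, ?_, fun t ht =>
    csSup_le ((hne t ht).image _) (mul_norm_mem_upperBounds_image_inner_sub t)⟩
  · exact concaveOn_sublevelSup (concaveOn_inner_sub hconv)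
      (by simpa only [dist_eq_norm] using convexOn_dist θs hconv) (convex_Ici 0) hne
      fun t _ => ⟨_, mul_norm_mem_upperBounds_image_inner_sub t⟩
  · rw [sublevelSup_norm_sub_zero _ hθs, sub_self, inner_zero_right]

theorem stmt_2 {d : ℕ} (C : Set (EuclideanSpace ℝ (Fin d)))
    (hconv : Convex ℝ C) (hclosed : IsClosed C) (hne : C.Nonempty)
    (θs : EuclideanSpace ℝ (Fin d)) (hθs : θs ∈ C)
    (v : EuclideanSpace ℝ (Fin d)) :
    ConcaveOn ℝ (Set.Ici (0 : ℝ)) (fsup C θs v) ∧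
    fsup C θs v 0 = 0 ∧
    ∀ t : ℝ, 0 ≤ t → fsup C θs v t ≤ t * ‖v - θs‖ :=
  stmt_2_general C hconv θs hθs v
end

section
/- (Gilbert–Varshamov type bound) For every positive integer d divisible by 4, there exists a subset F of the set {v ∈ {0,1}^d : Σᵢ vᵢ = d/2} such that |F| ≥ exp(d/32) and for all distinct w, w' ∈ F, the Hamming distance satisfies d/8 ≤ H(w,w') ≤ d/2. (It suffices to prove this for d sufficiently large.) -/
/-!
Write `d = 4c`. Fix the first `c` coordinates to `1` and let the remaining `3c` coordinates be the
indicator of a `c`-subset of `Fin (3c)`: all these words have weight `2c = d/2`, and two of them are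
at distance `|S ∆ T| ≤ 2c`. A maximal family of `c`-subsets with pairwise `|S ∆ T| > c/2` covers
all `C(3c, c)` of them by balls of radius `c/2`, each of size at most `∑_{j ≤ c/2} C(3c, j)`. Since
`C(3c, j + 1) ≥ 2 C(3c, j)` for `j < c`, this ball size is at most `2 C(3c, c/2)` and
`C(3c, c) ≥ 2^(c/2) C(3c, c/2)`, so the family has at least `2^(c/2 - 1) ≥ e^(c/8)` members.
-/

open Finset
open scoped symmDiff

lemma Finset.exists_pairwise_not_rel_card_le_mul {α : Type*} (r : α → α → Prop) [DecidableRel r]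
    (hsymm : ∀ a b, r a b → r b a) (hrefl : ∀ a, r a a)
    (T : Finset α) (m : ℕ) (hm : ∀ a ∈ T, #{b ∈ T | r a b} ≤ m) :
    ∃ F ⊆ T, #T ≤ #F * m ∧ (F : Set α).Pairwise fun a b => ¬ r a b := by
  classical
  set 𝒮 := T.powerset.filter fun F : Finset α => (F : Set α).Pairwise fun a b => ¬ r a b
  obtain ⟨F, hF, hmax⟩ := exists_max_image 𝒮 card ⟨∅, by simp [𝒮]⟩
  obtain ⟨hFT, hFpair⟩ := mem_filter.1 hF
  rw [mem_powerset] at hFT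
  have hcover : T ⊆ F.biUnion fun a => {b ∈ T | r a b} := by
    intro b hb
    by_cases hbF : b ∈ F
    · exact mem_biUnion.2 ⟨b, hbF, mem_filter.2 ⟨hb, hrefl b⟩⟩
    by_contra hfar
    simp only [mem_biUnion, mem_filter, not_exists, not_and] at hfar
    have hins : insert b F ∈ 𝒮 := by
      refine mem_filter.2 ⟨mem_powerset.2 (insert_subset hb hFT), ?_⟩
      rw [coe_insert, Set.pairwise_insert]
      exact ⟨hFpair, fun a ha _ =>
        ⟨fun hba => hfar a ha hb (hsymm _ _ hba), fun hab => hfar a ha hb hab⟩⟩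
    have := hmax _ hins
    rw [card_insert_of_notMem hbF] at this
    omega
  refine ⟨F, hFT, ?_, hFpair⟩
  calc #T ≤ #(F.biUnion fun a => {b ∈ T | r a b}) := card_le_card hcover
    _ ≤ ∑ a ∈ F, #{b ∈ T | r a b} := card_biUnion_le
    _ ≤ #F * m := sum_le_card_nsmul _ _ _ fun a ha => hm a (hFT ha)

section Packing

variable {α : Type*} [Fintype α] [DecidableEq α]

lemma card_filter_card_symmDiff_le (𝒜 : Finset (Finset α)) (A : Finset α) (k : ℕ) :
    #{B ∈ 𝒜 | #(A ∆ B) ≤ k} ≤ ∑ j ∈ range (k + 1), (Fintype.card α).choose j := by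
  calc #{B ∈ 𝒜 | #(A ∆ B) ≤ k}
      ≤ #((range (k + 1)).biUnion fun j => powersetCard j univ) := by
        refine card_le_card_of_injOn (A ∆ ·) (fun B hB => ?_) (symmDiff_right_injective A).injOn
        simp only [coe_filter] at hB
        simpa [Nat.lt_succ_iff] using hB.2
    _ ≤ ∑ j ∈ range (k + 1), #(powersetCard j (univ : Finset α)) := card_biUnion_le
    _ = ∑ j ∈ range (k + 1), (Fintype.card α).choose j := by simp

lemma exists_powersetCard_packing (r k : ℕ) :
    ∃ F ⊆ powersetCard r (univ : Finset α),
      (Fintype.card α).choose r ≤ #F * ∑ j ∈ range (k + 1), (Fintype.card α).choose j ∧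
      (F : Set (Finset α)).Pairwise fun A B => k < #(A ∆ B) := by
  obtain ⟨F, hFT, hcard, hF⟩ :=
    exists_pairwise_not_rel_card_le_mul (fun A B : Finset α => #(A ∆ B) ≤ k)
      (fun A B h => by rwa [symmDiff_comm]) (fun A => by simp) (powersetCard r univ) _
      fun A _ => card_filter_card_symmDiff_le _ A k
  refine ⟨F, hFT, by simpa using hcard, hF.mono' fun A B h => not_le.1 h⟩

end Packing

namespace Nat

lemma two_mul_choose_le_choose_succ {n k : ℕ} (h : 3 * k + 2 ≤ n) :
    2 * n.choose k ≤ n.choose (k + 1) := by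
  refine Nat.le_of_mul_le_mul_right ?_ k.succ_pos
  rw [choose_succ_right_eq, mul_comm 2, mul_assoc]
  exact Nat.mul_le_mul_left _ (by omega)

lemma two_pow_mul_choose_le {n r j : ℕ} (hn : 3 * r ≤ n) (hj : j ≤ r) :
    2 ^ (r - j) * n.choose j ≤ n.choose r := by
  induction r, hj using Nat.le_induction with
  | base => simp
  | succ r hjr ih =>
    calc 2 ^ (r + 1 - j) * n.choose j = 2 * (2 ^ (r - j) * n.choose j) := by
          rw [Nat.sub_add_comm hjr, pow_succ]; ring
      _ ≤ 2 * n.choose r := Nat.mul_le_mul_left 2 (ih (by omega))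
      _ ≤ n.choose (r + 1) := two_mul_choose_le_choose_succ (by omega)

lemma sum_range_choose_le_two_mul {n k : ℕ} (h : 3 * k ≤ n) :
    ∑ j ∈ range (k + 1), n.choose j ≤ 2 * n.choose k := by
  induction k with
  | zero => simp
  | succ k ih =>
    rw [sum_range_succ]
    have hstep := two_mul_choose_le_choose_succ (n := n) (k := k) (by omega)
    have hprev := ih (by omega)
    omega

end Nat

open Real in
lemma exp_div_eight_mul_two_le_two_pow {c j : ℕ} (hc : 4 ≤ c) (hj : c ≤ 2 * j) :
    exp (c / 8) * 2 ≤ 2 ^ j := by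
  have hlog := log_two_gt_d9
  have hc' : (4 : ℝ) ≤ c := by exact_mod_cast hc
  have hj' : (c : ℝ) ≤ 2 * j := by exact_mod_cast hj
  calc exp (c / 8) * 2 = exp (c / 8 + log 2) := by rw [exp_add, exp_log two_pos]
    _ ≤ exp (j * log 2) := exp_le_exp.2 (by nlinarith)
    _ = 2 ^ j := by rw [exp_nat_mul, exp_log two_pos]

lemma exists_large_johnson_code {c : ℕ} (hc : 4 ≤ c) :
    ∃ F ⊆ powersetCard c (univ : Finset (Fin (3 * c))),
      Real.exp (c / 8) ≤ #F ∧
      (F : Set (Finset (Fin (3 * c)))).Pairwise fun A B => c / 2 < #(A ∆ B) := by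
  obtain ⟨F, hFT, hcard, hF⟩ := exists_powersetCard_packing (α := Fin (3 * c)) c (c / 2)
  rw [Fintype.card_fin] at hcard
  refine ⟨F, hFT, ?_, hF⟩
  set C := (3 * c).choose (c / 2)
  have hC : 0 < C := Nat.choose_pos (by omega)
  have hsum := Nat.sum_range_choose_le_two_mul (n := 3 * c) (k := c / 2) (by omega)
  have hpow := Nat.two_pow_mul_choose_le (n := 3 * c) le_rfl (Nat.div_le_self c 2)
  have hexp := exp_div_eight_mul_two_le_two_pow (j := c - c / 2) hc (by omega)
  refine le_of_mul_le_mul_right ?_ (by positivity : (0 : ℝ) < 2 * C)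
  calc Real.exp (c / 8) * (2 * C) = Real.exp (c / 8) * 2 * C := by ring
    _ ≤ 2 ^ (c - c / 2) * C := by gcongr
    _ ≤ (3 * c).choose c := by exact_mod_cast hpow
    _ ≤ #F * ∑ j ∈ range (c / 2 + 1), (3 * c).choose j := by exact_mod_cast hcard
    _ ≤ #F * (2 * C) := by exact_mod_cast Nat.mul_le_mul_left _ hsum

section BinaryVec

variable {ι : Type*} [DecidableEq ι]

def binaryVec (S : Finset ι) : ι → Fin 2 :=
  fun i => if i ∈ S then 1 else 0

lemma hammingDist_binaryVec [Fintype ι] (S T : Finset ι) :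
    hammingDist (binaryVec S) (binaryVec T) = #(S ∆ T) := by
  unfold hammingDist binaryVec
  congr 1
  ext i
  by_cases hS : i ∈ S <;> by_cases hT : i ∈ T <;> simp [hS, hT, mem_symmDiff]

lemma sum_binaryVec [Fintype ι] (S : Finset ι) :
    ∑ i, (binaryVec S i : ℕ) = #S := by
  simp [binaryVec, apply_ite Fin.val]

end BinaryVec

lemma Fin.hammingDist_append {β : Type*} [DecidableEq β] {m n : ℕ} (x x' : Fin m → β)
    (y y' : Fin n → β) :
    hammingDist (Fin.append x y) (Fin.append x' y') = hammingDist x x' + hammingDist y y' := by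
  simp only [hammingDist, card_filter, Fin.sum_univ_add, Fin.append_left, Fin.append_right]

lemma exists_constant_weight_code {c : ℕ} (hc : 4 ≤ c) :
    ∃ F : Finset (Fin (c + 3 * c) → Fin 2), (∀ w ∈ F, ∑ i, (w i : ℕ) = 2 * c) ∧
      Real.exp (c / 8) ≤ #F ∧
      (F : Set (Fin (c + 3 * c) → Fin 2)).Pairwise
        fun w w' => c / 2 < hammingDist w w' ∧ hammingDist w w' ≤ 2 * c := by
  obtain ⟨𝒜, h𝒜, hcard, hfar⟩ := exists_large_johnson_code hc
  have hweight {S} (hS : S ∈ 𝒜) : #S = c := (mem_powersetCard.1 (h𝒜 hS)).2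
  let pad (S : Finset (Fin (3 * c))) : Fin (c + 3 * c) → Fin 2 := Fin.append 1 (binaryVec S)
  have hdist (S T) : hammingDist (pad S) (pad T) = #(S ∆ T) := by
    rw [Fin.hammingDist_append, hammingDist_self, hammingDist_binaryVec, zero_add]
  have hpad : pad.Injective := fun S T h => by
    rw [← symmDiff_eq_bot, bot_eq_empty, ← card_eq_zero, ← hdist, h, hammingDist_self]
  refine ⟨𝒜.image pad, ?_, by rwa [card_image_of_injective _ hpad], ?_⟩
  · simp only [forall_mem_image]
    intro S hS
    simp [pad, Fin.sum_univ_add, sum_binaryVec, hweight hS, two_mul]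
  · rw [coe_image, hpad.injOn.pairwise_image]
    intro S hS T hT hne
    have hup : #(S ∆ T) ≤ #S + #T := (card_le_card symmDiff_le_sup).trans (card_union_le _ _)
    simp only [Function.onFun, hdist]
    exact ⟨hfar hS hT hne, by rw [hweight hS, hweight hT] at hup; omega⟩

/-- Gilbert–Varshamov type bound. -/
theorem stmt_3 : ∃ d₀ : ℕ, ∀ d : ℕ, d₀ ≤ d → 0 < d → 4 ∣ d →
    ∃ F : Finset (Fin d → Fin 2),
      (∀ w ∈ F, ∑ i, ((w i : ℕ)) = d / 2) ∧
      Real.exp ((d : ℝ) / 32) ≤ (F.card : ℝ) ∧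
      ∀ w ∈ F, ∀ w' ∈ F, w ≠ w' →
        (d : ℝ) / 8 ≤ (hammingDist w w' : ℝ) ∧ (hammingDist w w' : ℝ) ≤ (d : ℝ) / 2 := by
  refine ⟨16, fun d hd _ hdvd => ?_⟩
  obtain ⟨c, rfl⟩ : ∃ c, d = c + 3 * c := ⟨d / 4, by omega⟩
  obtain ⟨F, hweight, hcard, hdist⟩ := exists_constant_weight_code (c := c) (by omega)
  refine ⟨F, fun w hw => by rw [hweight w hw]; omega, ?_, fun w hw w' hw' hne => ?_⟩
  · convert hcard using 2
    push_cast
    ring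
  · obtain ⟨hlow, hup⟩ := hdist hw hw' hne
    constructor
    · rw [div_le_iff₀ (by norm_num)]
      exact_mod_cast (by omega : c + 3 * c ≤ hammingDist w w' * 8)
    · rw [le_div_iff₀ (by norm_num)]
      exact_mod_cast (by omega : hammingDist w w' * 2 ≤ c + 3 * c)
end

section
/- Let θ ∈ [0,1]^{n×n} satisfy the SST tournament constraints (for the identity ordering): θ_{ij} ≤ θ_{ik} whenever i ≠ j, i ≠ k, k < j; θ_{ji} = 1 - θ_{ij} for i ≠ j; θ_{ii} = 0. Let R_i(θ) = Σⱼ θ_{ij}. Then for any indices i, j with |R_i(pθ) - R_j(pθ)| ≤ 4√(np log n), we have Σ_{k=1}^n (pθ_{ik} - pθ_{jk})² ≤ 4p √(np log n), for any p ∈ (0,1]. -/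
/-!
For `i < j` and `m ∉ {i, j}`, strong stochastic transitivity gives
`0 ≤ θ j m - θ i m ≤ 1 - θ i j`, so each of these squared differences is at most
`(1 - θ i j) (θ j m - θ i m)`. Summing, and adding the two terms `m = i, j` (which equal
`(1 - θ i j)²` and `(θ i j)²`), yields `∑ₘ (θ i m - θ j m)² ≤ (1 - θ i j) (Rⱼ - Rᵢ) + θ i j`.
After scaling by `p`, the first summand is controlled by the hypothesis on the row sums and
the second by `p ≤ √(n p log n)`.
-/

open Finset

/-- SST tournament constraints (identity ordering) for an `n × n` matrix with
1-based indices in `[1, n]`. -/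
def SSTTournament (n : ℕ) (θ : ℕ → ℕ → ℝ) : Prop :=
  (∀ i ∈ Icc 1 n, ∀ j ∈ Icc 1 n, θ i j ∈ Set.Icc (0 : ℝ) 1) ∧
  (∀ i ∈ Icc 1 n, ∀ j ∈ Icc 1 n, ∀ k ∈ Icc 1 n,
      i ≠ j → i ≠ k → k < j → θ i j ≤ θ i k) ∧
  (∀ i ∈ Icc 1 n, ∀ j ∈ Icc 1 n, i ≠ j → θ j i = 1 - θ i j) ∧
  (∀ i ∈ Icc 1 n, θ i i = 0)

namespace SSTTournament

variable {n : ℕ} {θ : ℕ → ℕ → ℝ} {i j m : ℕ}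

theorem sub_mem_Icc (hθ : SSTTournament n θ) (hi : i ∈ Icc 1 n) (hj : j ∈ Icc 1 n)
    (hm : m ∈ Icc 1 n) (hij : i < j) (hmi : m ≠ i) (hmj : m ≠ j) :
    θ j m - θ i m ∈ Set.Icc 0 (1 - θ i j) := by
  obtain ⟨hbd, hmono, hskew, -⟩ := hθ
  constructor
  · have := hmono m hm j hj i hi hmj hmi hij
    linarith [hskew m hm i hi hmi, hskew m hm j hj hmj]
  · rcases lt_or_gt_of_ne hmj with hmj' | hjm
    · linarith [hmono i hi j hj m hm hij.ne hmi.symm hmj', (hbd j hj m hm).2]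
    · linarith [hmono j hj m hm i hi hmj.symm hij.ne' (hij.trans hjm),
        hskew i hi j hj hij.ne, (hbd i hi m hm).1]

theorem sum_sq_sub_le (hθ : SSTTournament n θ) (hi : i ∈ Icc 1 n) (hj : j ∈ Icc 1 n)
    (hij : i < j) :
    ∑ m ∈ Icc 1 n, (θ i m - θ j m) ^ 2
      ≤ (1 - θ i j) * (∑ m ∈ Icc 1 n, θ j m - ∑ m ∈ Icc 1 n, θ i m) + θ i j := by
  obtain ⟨hskew, hdiag⟩ := hθ.2.2
  set s := Icc 1 n \ {i, j}
  have hsplit (F : ℕ → ℝ) : ∑ m ∈ Icc 1 n, F m = ∑ m ∈ s, F m + (F i + F j) := by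
    rw [← sum_sdiff (s₁ := {i, j}) (by simp [insert_subset_iff, hi, hj]), sum_pair hij.ne]
  have hrest : ∑ m ∈ s, (θ i m - θ j m) ^ 2 ≤ (1 - θ i j) * ∑ m ∈ s, (θ j m - θ i m) := by
    rw [mul_sum]
    refine sum_le_sum fun m hm ↦ ?_
    simp only [s, mem_sdiff, mem_insert, mem_singleton, not_or] at hm
    obtain ⟨hx0, hx1⟩ := hθ.sub_mem_Icc hi hj hm.1 hij hm.2.1 hm.2.2
    calc (θ i m - θ j m) ^ 2 = (θ j m - θ i m) * (θ j m - θ i m) := by ring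
      _ ≤ (1 - θ i j) * (θ j m - θ i m) := mul_le_mul_of_nonneg_right hx1 hx0
  have hdiff : ∑ m ∈ Icc 1 n, θ j m - ∑ m ∈ Icc 1 n, θ i m
      = ∑ m ∈ s, (θ j m - θ i m) + (θ j i - θ i j) := by
    rw [← sum_sub_distrib, hsplit, hdiag i hi, hdiag j hj]
    ring
  rw [hsplit, hdiff, hdiag i hi, hdiag j hj, hskew i hi j hj hij.ne]
  linear_combination hrest

theorem exists_sum_sq_sub_le (hθ : SSTTournament n θ) (hi : i ∈ Icc 1 n)
    (hj : j ∈ Icc 1 n) :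
    ∃ c ∈ Set.Icc (0 : ℝ) 1, ∑ m ∈ Icc 1 n, (θ i m - θ j m) ^ 2
      ≤ (1 - c) * |∑ m ∈ Icc 1 n, θ i m - ∑ m ∈ Icc 1 n, θ j m| + c := by
  rcases lt_trichotomy i j with hij | rfl | hji
  · refine ⟨θ i j, hθ.1 i hi j hj, (hθ.sum_sq_sub_le hi hj hij).trans ?_⟩
    gcongr
    · linarith [(hθ.1 i hi j hj).2]
    · rw [abs_sub_comm]; exact le_abs_self _
  · exact ⟨0, by simp⟩
  · refine ⟨θ j i, hθ.1 j hj i hi, ?_⟩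
    calc ∑ m ∈ Icc 1 n, (θ i m - θ j m) ^ 2 = ∑ m ∈ Icc 1 n, (θ j m - θ i m) ^ 2 := by
          congr! 1 with m; ring
      _ ≤ _ := hθ.sum_sq_sub_le hj hi hji
      _ ≤ _ := by
          gcongr
          · linarith [(hθ.1 j hj i hi).2]
          · exact le_abs_self _

end SSTTournament

theorem le_sqrt_mul_mul_log {n : ℕ} (hn : 2 ≤ n) {p : ℝ} (hp : 0 < p) (hp1 : p ≤ 1) :
    p ≤ Real.sqrt (n * p * Real.log n) := by
  have hn' : (2 : ℝ) ≤ n := by exact_mod_cast hn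
  have hlog : 1 / 2 ≤ Real.log n := by
    linarith [Real.log_two_gt_d9, Real.log_le_log (by norm_num) hn']
  refine Real.le_sqrt_of_sq_le ?_
  nlinarith [mul_le_mul hn' hlog (by norm_num) (by linarith)]

theorem stmt_6 (n : ℕ) (hn : 2 ≤ n) (p : ℝ) (hp : 0 < p) (hp1 : p ≤ 1)
    (θ : ℕ → ℕ → ℝ) (hθ : SSTTournament n θ)
    (i j : ℕ) (hi : i ∈ Icc 1 n) (hj : j ∈ Icc 1 n)
    (hR : |(∑ m ∈ Icc 1 n, p * θ i m) - ∑ m ∈ Icc 1 n, p * θ j m|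
      ≤ 4 * Real.sqrt (n * p * Real.log n)) :
    ∑ m ∈ Icc 1 n, (p * θ i m - p * θ j m) ^ 2
      ≤ 4 * p * Real.sqrt (n * p * Real.log n) := by
  set B := 4 * Real.sqrt (n * p * Real.log n)
  set A := |∑ m ∈ Icc 1 n, θ i m - ∑ m ∈ Icc 1 n, θ j m|
  obtain ⟨c, ⟨hc0, hc1⟩, hS⟩ := hθ.exists_sum_sq_sub_le hi hj
  have hpB : p ≤ B := by
    linarith [le_sqrt_mul_mul_log hn hp hp1, Real.sqrt_nonneg (n * p * Real.log n)]
  have hA : p * A ≤ B := by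
    rwa [← mul_sum, ← mul_sum, ← mul_sub, abs_mul, abs_of_pos hp] at hR
  calc ∑ m ∈ Icc 1 n, (p * θ i m - p * θ j m) ^ 2
        = p ^ 2 * ∑ m ∈ Icc 1 n, (θ i m - θ j m) ^ 2 := by
          rw [mul_sum]; congr! 1 with m; ring
    _ ≤ p ^ 2 * ((1 - c) * A + c) := by gcongr
    _ = p * (1 - c) * (p * A) + p * c * p := by ring
    _ ≤ p * (1 - c) * B + p * c * B := by gcongr
    _ = 4 * p * Real.sqrt (n * p * Real.log n) := by ring
end

section
/- Let θ ∈ [0,1]^{n×n} satisfy θ_{ij} = F(w_i - w_j) for a distribution function F with continuous strictly positive density f, F(x) + F(-x) = 1, and weights w_i ∈ [-M, M]. Set L = sup_{|x|≤2M} f(x), L' = inf_{|x|≤2M} f(x). If i, j satisfy |R_i(pθ) - R_j(pθ)| ≤ 4√(np log n), then Σₖ (pθ_{ik} - pθ_{jk})² ≤ 16p (L/L')² log n. -/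
/-!
By the mean value theorem, `θ i m - θ j m = f(c_m) (w i - w j)` with `c_m ∈ [-2M, 2M]`, so
`L' ≤ f(c_m) ≤ L`: the entries of row `i` minus row `j` share the sign of `w i - w j` and are
comparable in size. Hence `n` times their sum of squares is at most `(L/L')²` times the square of
their sum, the row-sum difference, which the hypothesis bounds by `16 n p log n`.
-/

open Finset

theorem exists_mem_uIcc_sub_eq_mul_sub {F f : ℝ → ℝ} (hF : ∀ x, HasDerivAt F (f x) x) (x y : ℝ) :
    ∃ c ∈ Set.uIcc x y, F x - F y = f c * (x - y) := by
  wlog hxy : x < y generalizing x y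
  · rcases (not_lt.1 hxy).eq_or_lt with rfl | hyx
    · exact ⟨y, Set.left_mem_uIcc, by simp⟩
    · obtain ⟨c, hc, h⟩ := this y x hyx
      exact ⟨c, Set.uIcc_comm x y ▸ hc, by linear_combination -h⟩
  obtain ⟨c, hc, h⟩ := exists_hasDerivAt_eq_slope F f hxy
    (fun z _ => (hF z).continuousAt.continuousWithinAt) (fun z _ => hF z)
  refine ⟨c, Set.Icc_subset_uIcc (Set.Ioo_subset_Icc_self hc), ?_⟩
  rw [h, div_mul_eq_mul_div, eq_div_iff (sub_ne_zero.2 hxy.ne')]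
  ring

/-- Terms `g m * d` with `g m ∈ [a, b]`, `0 < a`, share a sign, so `|∑ g m * d| ≥ #s a |d|`
whereas `∑ (g m * d)² ≤ #s b² d²`. -/
theorem card_mul_sum_sq_le {ι : Type*} (s : Finset ι) {g : ι → ℝ} {a b : ℝ} (ha : 0 < a)
    (hg : ∀ m ∈ s, g m ∈ Set.Icc a b) (d : ℝ) :
    #s * ∑ m ∈ s, (g m * d) ^ 2 ≤ (b / a) ^ 2 * (∑ m ∈ s, g m * d) ^ 2 := by
  have hsq : ∑ m ∈ s, (g m * d) ^ 2 ≤ #s * (b * d) ^ 2 := by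
    rw [← nsmul_eq_mul]
    refine sum_le_card_nsmul _ _ _ fun m hm => ?_
    obtain ⟨hag, hgb⟩ := hg m hm
    rw [mul_pow, mul_pow]
    gcongr
    linarith
  have hlin : #s * a * |d| ≤ |∑ m ∈ s, g m * d| := by
    rw [← sum_mul, abs_mul, abs_of_nonneg (sum_nonneg fun m hm => ha.le.trans (hg m hm).1),
      ← nsmul_eq_mul]
    gcongr
    exact card_nsmul_le_sum _ _ _ fun m hm => (hg m hm).1
  calc #s * ∑ m ∈ s, (g m * d) ^ 2
      ≤ #s * (#s * (b * d) ^ 2) := by gcongr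
    _ = (b / a) ^ 2 * (#s * a * |d|) ^ 2 := by
      field_simp
      rw [sq_abs]
    _ ≤ (b / a) ^ 2 * (∑ m ∈ s, g m * d) ^ 2 := by
      rw [← sq_abs (∑ m ∈ s, g m * d)]
      gcongr

theorem exists_mem_Icc_sub_eq_mul_sub_of_mem_Icc {F f : ℝ → ℝ}
    (hF : ∀ x, HasDerivAt F (f x) x) {M a b c : ℝ} (ha : a ∈ Set.Icc (-M) M)
    (hb : b ∈ Set.Icc (-M) M) (hc : c ∈ Set.Icc (-M) M) :
    ∃ z ∈ Set.Icc (-(2 * M)) (2 * M), F (a - c) - F (b - c) = f z * (a - b) := by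
  obtain ⟨z, hz, hzF⟩ := exists_mem_uIcc_sub_eq_mul_sub hF (a - c) (b - c)
  refine ⟨z, Set.uIcc_subset_Icc ?_ ?_ hz, by rw [hzF]; ring⟩ <;>
    constructor <;> linarith [ha.1, ha.2, hb.1, hb.2, hc.1, hc.2]

theorem sum_sq_le_of_abs_sum_le_sqrt {ι : Type*} {s : Finset ι} (hs : s.Nonempty) {g : ι → ℝ}
    {a b : ℝ} (ha : 0 < a) (hg : ∀ m ∈ s, g m ∈ Set.Icc a b) {c d q : ℝ} (hq : 0 ≤ q)
    (h : |∑ m ∈ s, g m * d| ≤ c * Real.sqrt (#s * q)) :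
    ∑ m ∈ s, (g m * d) ^ 2 ≤ c ^ 2 * (b / a) ^ 2 * q := by
  have hsq : (∑ m ∈ s, g m * d) ^ 2 ≤ c ^ 2 * (#s * q) := by
    rw [← sq_abs, ← Real.sq_sqrt (by positivity : (0 : ℝ) ≤ #s * q), ← mul_pow]
    exact pow_le_pow_left₀ (abs_nonneg _) h 2
  have hcard : (0 : ℝ) < #s := by exact_mod_cast hs.card_pos
  refine le_of_mul_le_mul_left ?_ hcard
  calc _ ≤ (b / a) ^ 2 * (∑ m ∈ s, g m * d) ^ 2 := card_mul_sum_sq_le s ha hg d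
    _ ≤ (b / a) ^ 2 * (c ^ 2 * (#s * q)) := by gcongr
    _ = _ := by ring

theorem stmt_8_general (n : ℕ) (p : ℝ) (hp : 0 < p)
    (M : ℝ) (F f : ℝ → ℝ)
    (hf_cont : Continuous f) (hf_pos : ∀ x, 0 < f x)
    (hF_deriv : ∀ x, HasDerivAt F (f x) x)
    (w : ℕ → ℝ) (hw : ∀ i ∈ Icc 1 n, w i ∈ Set.Icc (-M) M)
    (θ : ℕ → ℕ → ℝ)
    (hθ : ∀ i ∈ Icc 1 n, ∀ j ∈ Icc 1 n, θ i j = F (w i - w j))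
    (L L' : ℝ)
    (hL : L = sSup (f '' Set.Icc (-(2 * M)) (2 * M)))
    (hL' : L' = sInf (f '' Set.Icc (-(2 * M)) (2 * M)))
    (i j : ℕ) (hi : i ∈ Icc 1 n) (hj : j ∈ Icc 1 n)
    (hR : |(∑ m ∈ Icc 1 n, p * θ i m) - ∑ m ∈ Icc 1 n, p * θ j m|
      ≤ 4 * Real.sqrt (n * p * Real.log n)) :
    ∑ m ∈ Icc 1 n, (p * θ i m - p * θ j m) ^ 2
      ≤ 16 * p * (L / L') ^ 2 * Real.log n := by
  set K := Set.Icc (-(2 * M)) (2 * M)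
  have hK : IsCompact (f '' K) := isCompact_Icc.image hf_cont
  have hKne : K.Nonempty := ⟨0, by obtain ⟨h₁, h₂⟩ := hw i hi; constructor <;> linarith⟩
  have hL'pos : 0 < L' := by
    obtain ⟨x, -, hx⟩ := hL' ▸ hK.sInf_mem (hKne.image f)
    exact hx ▸ hf_pos x
  have hslope : ∀ m ∈ Icc 1 n, ∃ y ∈ Set.Icc L' L,
      p * θ i m - p * θ j m = y * (p * (w i - w j)) := by
    intro m hm
    obtain ⟨z, hzK, hzF⟩ :=
      exists_mem_Icc_sub_eq_mul_sub_of_mem_Icc hF_deriv (hw i hi) (hw j hj) (hw m hm)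
    refine ⟨f z, ⟨hL' ▸ csInf_le hK.bddBelow ⟨z, hzK, rfl⟩,
      hL ▸ le_csSup hK.bddAbove ⟨z, hzK, rfl⟩⟩, ?_⟩
    rw [hθ i hi m hm, hθ j hj m hm, ← mul_sub, hzF]
    ring
  choose! g hg hgθ using hslope
  have hsum : (∑ m ∈ Icc 1 n, p * θ i m) - ∑ m ∈ Icc 1 n, p * θ j m
      = ∑ m ∈ Icc 1 n, g m * (p * (w i - w j)) := by
    rw [← sum_sub_distrib]
    exact sum_congr rfl hgθ
  calc ∑ m ∈ Icc 1 n, (p * θ i m - p * θ j m) ^ 2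
      = ∑ m ∈ Icc 1 n, (g m * (p * (w i - w j))) ^ 2 :=
        sum_congr rfl fun m hm => by rw [hgθ m hm]
    _ ≤ 4 ^ 2 * (L / L') ^ 2 * (p * Real.log n) := by
      refine sum_sq_le_of_abs_sum_le_sqrt ⟨i, hi⟩ hL'pos hg (by positivity) ?_
      rwa [← hsum, Nat.card_Icc, Nat.add_sub_cancel, ← mul_assoc]
    _ = 16 * p * (L / L') ^ 2 * Real.log n := by ring

/-- Generalized Bradley–Terry matrices: fast adaptation of close rows. -/
theorem stmt_8 (n : ℕ) (hn : 2 ≤ n) (p : ℝ) (hp : 0 < p) (hp1 : p ≤ 1)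
    (M : ℝ) (hM : 0 < M) (F f : ℝ → ℝ)
    (hf_cont : Continuous f) (hf_pos : ∀ x, 0 < f x)
    (hF_mono : Monotone F) (hF_deriv : ∀ x, HasDerivAt F (f x) x)
    (hF_sym : ∀ x, F x + F (-x) = 1)
    (w : ℕ → ℝ) (hw : ∀ i ∈ Icc 1 n, w i ∈ Set.Icc (-M) M)
    (θ : ℕ → ℕ → ℝ)
    (hθ : ∀ i ∈ Icc 1 n, ∀ j ∈ Icc 1 n, θ i j = F (w i - w j))
    (L L' : ℝ)
    (hL : L = sSup (f '' Set.Icc (-(2 * M)) (2 * M)))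
    (hL' : L' = sInf (f '' Set.Icc (-(2 * M)) (2 * M)))
    (i j : ℕ) (hi : i ∈ Icc 1 n) (hj : j ∈ Icc 1 n)
    (hR : |(∑ m ∈ Icc 1 n, p * θ i m) - ∑ m ∈ Icc 1 n, p * θ j m|
      ≤ 4 * Real.sqrt (n * p * Real.log n)) :
    ∑ m ∈ Icc 1 n, (p * θ i m - p * θ j m) ^ 2
      ≤ 16 * p * (L / L') ^ 2 * Real.log n :=
  stmt_8_general n p hp M F f hf_cont hf_pos hF_deriv w hw θ hθ L L' hL hL' i j hi hj hR
end

section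
/- (Deterministic sorting lemma, skew-symmetric case) Let θ be an n×n matrix whose row sums R_i := Σⱼ θ_{ij} are nondecreasing in i. Let r ∈ ℝⁿ be any vector satisfying max over i of |r_i - R_i - c| ≤ t for some constant c and t > 0, and let σ̂ be a permutation sorting r, i.e. r_{σ̂(1)} ≤ r_{σ̂(2)} ≤ ... ≤ r_{σ̂(n)}. Then max over i ∈ [n] of |R_i - R_{σ̂(i)}| ≤ 2t. -/
/-!
By pigeonhole, for each `i` some `j ≥ i` has `σ j ≤ i`: otherwise `σ` would map `[i, ∞)`
injectively into `(i, ∞)`. As `σ` sorts `r` and `r` is within `t` of `R + c`, this gives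
`R (σ i) - t ≤ r (σ i) - c ≤ r (σ j) - c ≤ R (σ j) + t ≤ R i + t`; the other inequality is the
same argument in the dual order.
-/

open Finset

theorem Equiv.Perm.exists_le_apply_le {α : Type*} [LinearOrder α] [LocallyFiniteOrderTop α]
    (σ : Equiv.Perm α) (i : α) : ∃ j, i ≤ j ∧ σ j ≤ i := by
  by_contra! h
  have hmaps : Set.MapsTo σ (Ici i) (Ioi i) := fun j hj => mem_Ioi.2 (h j (mem_Ici.1 hj))
  have hcard := card_le_card_of_injOn σ hmaps σ.injective.injOn
  rw [card_Ioi_eq_card_Ici_sub_one] at hcard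
  have : 0 < #(Ici i) := card_pos.2 nonempty_Ici
  omega

theorem Equiv.Perm.exists_le_le_apply {α : Type*} [LinearOrder α] [LocallyFiniteOrderBot α]
    (σ : Equiv.Perm α) (i : α) : ∃ j, j ≤ i ∧ i ≤ σ j :=
  Equiv.Perm.exists_le_apply_le (α := αᵒᵈ) σ i

theorem abs_sub_apply_le_of_monotone_comp_perm {α : Type*} [LinearOrder α]
    [LocallyFiniteOrderTop α] [LocallyFiniteOrderBot α] {R r : α → ℝ} {c t : ℝ}
    (hR : Monotone R) (hconc : ∀ k, |r k - R k - c| ≤ t) {σ : Equiv.Perm α}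
    (hσ : Monotone (r ∘ σ)) (i : α) : |R i - R (σ i)| ≤ 2 * t := by
  have hlo k : R k + c - t ≤ r k := by linarith [(abs_le.1 (hconc k)).1]
  have hhi k : r k ≤ R k + c + t := by linarith [(abs_le.1 (hconc k)).2]
  rw [abs_sub_le_iff]
  constructor
  · obtain ⟨j, hji, hij⟩ := σ.exists_le_le_apply i
    have h1 : r (σ j) ≤ r (σ i) := hσ hji
    have h2 : R i ≤ R (σ j) := hR hij
    linarith [hlo (σ j), hhi (σ i)]
  · obtain ⟨j, hij, hji⟩ := σ.exists_le_apply_le i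
    have h1 : r (σ i) ≤ r (σ j) := hσ hij
    have h2 : R (σ j) ≤ R i := hR hji
    linarith [hlo (σ i), hhi (σ j)]

theorem stmt_11_general (n : ℕ) (R : Fin n → ℝ)
    (hmono : Monotone R)
    (r : Fin n → ℝ) (c t : ℝ)
    (hconc : ∀ i, |r i - R i - c| ≤ t)
    (σ : Equiv.Perm (Fin n)) (hσ : Monotone fun i => r (σ i)) :
    ∀ i, |R i - R (σ i)| ≤ 2 * t :=
  abs_sub_apply_le_of_monotone_comp_perm hmono hconc hσ

/-- Deterministic sorting lemma: sorting noisy row sums does not move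
the true row sums by more than `2t`. -/
theorem stmt_11 (n : ℕ) (θ : Fin n → Fin n → ℝ) (R : Fin n → ℝ)
    (hR : ∀ i, R i = ∑ j, θ i j) (hmono : Monotone R)
    (r : Fin n → ℝ) (c t : ℝ) (ht : 0 < t)
    (hconc : ∀ i, |r i - R i - c| ≤ t)
    (σ : Equiv.Perm (Fin n)) (hσ : Monotone fun i => r (σ i)) :
    ∀ i, |R i - R (σ i)| ≤ 2 * t :=
  stmt_11_general n R hmono r c t hconc σ hσ
end
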